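/- Let Θ be a smooth function of (w,z,x,y) satisfying the second heavenly equation Θ_{xw} + Θ_{yz} + Θ_{xx}Θ_{yy} − (Θ_{xy})² = 0. Then for every λ ∈ ℂ the two vector fields L₀ = ∂_y − λ(∂_w − Θ_{xy}∂_y + Θ_{yy}∂_x) and L₁ = ∂_x + λ(∂_z + Θ_{xx}∂_y − Θ_{xy}∂_x) commute: [L₀, L₁] = 0. -/

import Mathlib

/-- Partial derivative with respect to the first variable `w`. -/
noncomputable def pw (f : ℂ → ℂ → ℂ → ℂ → ℂ) : ℂ → ℂ → ℂ → ℂ → ℂ :=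
  fun w z x y => deriv (fun t => f t z x y) w

/-- Partial derivative with respect to the second variable `z`. -/
noncomputable def pz (f : ℂ → ℂ → ℂ → ℂ → ℂ) : ℂ → ℂ → ℂ → ℂ → ℂ :=
  fun w z x y => deriv (fun t => f w t x y) z

/-- Partial derivative with respect to the third variable `x`. -/
noncomputable def px (f : ℂ → ℂ → ℂ → ℂ → ℂ) : ℂ → ℂ → ℂ → ℂ → ℂ :=
  fun w z x y => deriv (fun t => f w z t y) x

/-- Partial derivative with respect to the fourth variable `y`. -/
noncomputable def py (f : ℂ → ℂ → ℂ → ℂ → ℂ) : ℂ → ℂ → ℂ → ℂ → ℂ :=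
  fun w z x y => deriv (fun t => f w z x t) y

/-- Smoothness of a function of four complex variables. -/
def Smooth4 (f : ℂ → ℂ → ℂ → ℂ → ℂ) : Prop :=
  ContDiff ℂ ⊤ (fun p : ℂ × ℂ × ℂ × ℂ => f p.1 p.2.1 p.2.2.1 p.2.2.2)

/-- L₀ = ∂_y − λ(∂_w − Θ_{xy}∂_y + Θ_{yy}∂_x), acting on functions. -/
noncomputable def LaxL0 (Θ : ℂ → ℂ → ℂ → ℂ → ℂ) (lam : ℂ)
    (g : ℂ → ℂ → ℂ → ℂ → ℂ) : ℂ → ℂ → ℂ → ℂ → ℂ :=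
  fun w z x y =>
    py g w z x y - lam * (pw g w z x y
      - px (py Θ) w z x y * py g w z x y
      + py (py Θ) w z x y * px g w z x y)

/-- L₁ = ∂_x + λ(∂_z + Θ_{xx}∂_y − Θ_{xy}∂_x), acting on functions. -/
noncomputable def LaxL1 (Θ : ℂ → ℂ → ℂ → ℂ → ℂ) (lam : ℂ)
    (g : ℂ → ℂ → ℂ → ℂ → ℂ) : ℂ → ℂ → ℂ → ℂ → ℂ :=
  fun w z x y =>
    px g w z x y + lam * (pz g w z x y
      + px (px Θ) w z x y * py g w z x y
      - px (py Θ) w z x y * px g w z x y)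

/-!
On smooth functions both Lax operators are derivatives along vector fields on `ℂ⁴`:
`L₀ g = dg(V₀)` and `L₁ g = dg(V₁)` with, in the coordinates `(w, z, x, y)`,
`V₀ = (-λ, 0, -λΘ_{yy}, 1 + λΘ_{xy})` and `V₁ = (0, λ, 1 - λΘ_{xy}, λΘ_{xx})`.
Since second derivatives of `f` are symmetric, `L₀L₁f - L₁L₀f = df([V₀, V₁])`. Computing the
Lie bracket, the terms of order `λ` cancel (again by symmetry of mixed partials of `Θ`) and
`[V₀, V₁] = λ² (0, 0, H_y, -H_x)`, where `H = Θ_{xw} + Θ_{yz} + Θ_{xx}Θ_{yy} - Θ_{xy}²`.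
The heavenly equation says `H ≡ 0`, so the bracket vanishes.
-/

open VectorField

/-- Symmetry of second derivatives, read off from the Lie-bracket formula for two constant
vector fields. -/
theorem fderiv_fderiv_apply_comm {𝕜 E G : Type*} [NontriviallyNormedField 𝕜]
    [NormedAddCommGroup E] [NormedSpace 𝕜 E] [NormedAddCommGroup G] [NormedSpace 𝕜 G]
    {F : E → G} {p : E} {n : WithTop ℕ∞} (hF : ContDiffAt 𝕜 n F p)
    (hn : minSmoothness 𝕜 2 ≤ n) (u v : E) :
    fderiv 𝕜 (fun q => fderiv 𝕜 F q u) p v = fderiv 𝕜 (fun q => fderiv 𝕜 F q v) p u := by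
  have h := fderiv_apply_lieBracket hF hn (V := fun _ => v) (W := fun _ => u)
    (differentiableAt_const u) (differentiableAt_const v)
  simp only [lieBracket, fderiv_fun_const, Pi.zero_apply, zero_apply, sub_self,
    map_zero] at h
  exact sub_eq_zero.mp h.symm

section

def uncurry4 (f : ℂ → ℂ → ℂ → ℂ → ℂ) : ℂ × ℂ × ℂ × ℂ → ℂ :=
  fun p => f p.1 p.2.1 p.2.2.1 p.2.2.2

variable {f g Θ : ℂ → ℂ → ℂ → ℂ → ℂ} {w z x y lam : ℂ}

theorem hasDerivAt_w_slice (hf : DifferentiableAt ℂ (uncurry4 f) (w, z, x, y)) :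
    HasDerivAt (fun t => f t z x y) (fderiv ℂ (uncurry4 f) (w, z, x, y) (1, 0, 0, 0)) w := by
  have h := hf.hasFDerivAt.comp_hasDerivAt w <| (hasDerivAt_id w).prodMk <|
    (hasDerivAt_const w z).prodMk <| (hasDerivAt_const w x).prodMk (hasDerivAt_const w y)
  exact h

theorem hasDerivAt_z_slice (hf : DifferentiableAt ℂ (uncurry4 f) (w, z, x, y)) :
    HasDerivAt (fun t => f w t x y) (fderiv ℂ (uncurry4 f) (w, z, x, y) (0, 1, 0, 0)) z := by
  have h := hf.hasFDerivAt.comp_hasDerivAt z <| (hasDerivAt_const z w).prodMk <|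
    (hasDerivAt_id z).prodMk <| (hasDerivAt_const z x).prodMk (hasDerivAt_const z y)
  exact h

theorem hasDerivAt_x_slice (hf : DifferentiableAt ℂ (uncurry4 f) (w, z, x, y)) :
    HasDerivAt (fun t => f w z t y) (fderiv ℂ (uncurry4 f) (w, z, x, y) (0, 0, 1, 0)) x := by
  have h := hf.hasFDerivAt.comp_hasDerivAt x <| (hasDerivAt_const x w).prodMk <|
    (hasDerivAt_const x z).prodMk <| (hasDerivAt_id x).prodMk (hasDerivAt_const x y)
  exact h

theorem hasDerivAt_y_slice (hf : DifferentiableAt ℂ (uncurry4 f) (w, z, x, y)) :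
    HasDerivAt (fun t => f w z x t) (fderiv ℂ (uncurry4 f) (w, z, x, y) (0, 0, 0, 1)) y := by
  have h := hf.hasFDerivAt.comp_hasDerivAt y <| (hasDerivAt_const y w).prodMk <|
    (hasDerivAt_const y z).prodMk <| (hasDerivAt_const y x).prodMk (hasDerivAt_id y)
  exact h

theorem fderiv_uncurry4_apply (hf : DifferentiableAt ℂ (uncurry4 f) (w, z, x, y))
    (a b c d : ℂ) :
    fderiv ℂ (uncurry4 f) (w, z, x, y) (a, b, c, d)
      = a * pw f w z x y + b * pz f w z x y + c * px f w z x y + d * py f w z x y := by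
  have hv : ((a, b, c, d) : ℂ × ℂ × ℂ × ℂ)
      = a • (1, 0, 0, 0) + b • (0, 1, 0, 0) + c • (0, 0, 1, 0) + d • (0, 0, 0, 1) := by
    simp
  rw [hv, pw, pz, px, py, (hasDerivAt_w_slice hf).deriv, (hasDerivAt_z_slice hf).deriv,
    (hasDerivAt_x_slice hf).deriv, (hasDerivAt_y_slice hf).deriv]
  simp only [map_add, map_smul, smul_eq_mul]

theorem uncurry4_pw (hf : Differentiable ℂ (uncurry4 f)) :
    uncurry4 (pw f) = fun p => fderiv ℂ (uncurry4 f) p (1, 0, 0, 0) :=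
  funext fun _ => (hasDerivAt_w_slice (hf _)).deriv

theorem uncurry4_pz (hf : Differentiable ℂ (uncurry4 f)) :
    uncurry4 (pz f) = fun p => fderiv ℂ (uncurry4 f) p (0, 1, 0, 0) :=
  funext fun _ => (hasDerivAt_z_slice (hf _)).deriv

theorem uncurry4_px (hf : Differentiable ℂ (uncurry4 f)) :
    uncurry4 (px f) = fun p => fderiv ℂ (uncurry4 f) p (0, 0, 1, 0) :=
  funext fun _ => (hasDerivAt_x_slice (hf _)).deriv

theorem uncurry4_py (hf : Differentiable ℂ (uncurry4 f)) :
    uncurry4 (py f) = fun p => fderiv ℂ (uncurry4 f) p (0, 0, 0, 1) :=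
  funext fun _ => (hasDerivAt_y_slice (hf _)).deriv

namespace Smooth4

theorem contDiff (hf : Smooth4 f) : ContDiff ℂ ⊤ (uncurry4 f) := hf

theorem differentiable (hf : Smooth4 f) : Differentiable ℂ (uncurry4 f) :=
  hf.contDiff.differentiable (by simp)

theorem of_fderiv_apply (hf : Smooth4 f) {g : ℂ → ℂ → ℂ → ℂ → ℂ}
    {V : ℂ × ℂ × ℂ × ℂ → ℂ × ℂ × ℂ × ℂ} (hV : ContDiff ℂ ⊤ V)
    (hg : uncurry4 g = fun p => fderiv ℂ (uncurry4 f) p (V p)) : Smooth4 g := by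
  change ContDiff ℂ ⊤ (uncurry4 g)
  rw [hg]
  exact (hf.contDiff.fderiv_right le_rfl).clm_apply hV

theorem pw (hf : Smooth4 f) : Smooth4 (pw f) :=
  hf.of_fderiv_apply contDiff_const (uncurry4_pw hf.differentiable)
theorem pz (hf : Smooth4 f) : Smooth4 (pz f) :=
  hf.of_fderiv_apply contDiff_const (uncurry4_pz hf.differentiable)
theorem px (hf : Smooth4 f) : Smooth4 (px f) :=
  hf.of_fderiv_apply contDiff_const (uncurry4_px hf.differentiable)
theorem py (hf : Smooth4 f) : Smooth4 (py f) :=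
  hf.of_fderiv_apply contDiff_const (uncurry4_py hf.differentiable)

end Smooth4

theorem py_px_comm (hf : Smooth4 f) : py (px f) = px (py f) := by
  funext w z x y
  rw [py, px, (hasDerivAt_y_slice (hf.px.differentiable _)).deriv,
    (hasDerivAt_x_slice (hf.py.differentiable _)).deriv, uncurry4_px hf.differentiable,
    uncurry4_py hf.differentiable]
  exact fderiv_fderiv_apply_comm hf.contDiff.contDiffAt (by simp) _ _

theorem py_pz_comm (hf : Smooth4 f) : py (pz f) = pz (py f) := by
  funext w z x y
  rw [py, pz, (hasDerivAt_y_slice (hf.pz.differentiable _)).deriv,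
    (hasDerivAt_z_slice (hf.py.differentiable _)).deriv, uncurry4_pz hf.differentiable,
    uncurry4_py hf.differentiable]
  exact fderiv_fderiv_apply_comm hf.contDiff.contDiffAt (by simp) _ _

theorem py_pw_comm (hf : Smooth4 f) : py (pw f) = pw (py f) := by
  funext w z x y
  rw [py, pw, (hasDerivAt_y_slice (hf.pw.differentiable _)).deriv,
    (hasDerivAt_w_slice (hf.py.differentiable _)).deriv, uncurry4_pw hf.differentiable,
    uncurry4_py hf.differentiable]
  exact fderiv_fderiv_apply_comm hf.contDiff.contDiffAt (by simp) _ _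

theorem px_pz_comm (hf : Smooth4 f) : px (pz f) = pz (px f) := by
  funext w z x y
  rw [px, pz, (hasDerivAt_x_slice (hf.pz.differentiable _)).deriv,
    (hasDerivAt_z_slice (hf.px.differentiable _)).deriv, uncurry4_pz hf.differentiable,
    uncurry4_px hf.differentiable]
  exact fderiv_fderiv_apply_comm hf.contDiff.contDiffAt (by simp) _ _

theorem px_pw_comm (hf : Smooth4 f) : px (pw f) = pw (px f) := by
  funext w z x y
  rw [px, pw, (hasDerivAt_x_slice (hf.pw.differentiable _)).deriv,
    (hasDerivAt_w_slice (hf.px.differentiable _)).deriv, uncurry4_pw hf.differentiable,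
    uncurry4_px hf.differentiable]
  exact fderiv_fderiv_apply_comm hf.contDiff.contDiffAt (by simp) _ _

noncomputable def laxField0 (Θ : ℂ → ℂ → ℂ → ℂ → ℂ) (lam : ℂ) (p : ℂ × ℂ × ℂ × ℂ) :
    ℂ × ℂ × ℂ × ℂ :=
  (-lam, 0, -(lam * uncurry4 (py (py Θ)) p), 1 + lam * uncurry4 (px (py Θ)) p)

noncomputable def laxField1 (Θ : ℂ → ℂ → ℂ → ℂ → ℂ) (lam : ℂ) (p : ℂ × ℂ × ℂ × ℂ) :
    ℂ × ℂ × ℂ × ℂ :=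
  (0, lam, 1 - lam * uncurry4 (px (py Θ)) p, lam * uncurry4 (px (px Θ)) p)

theorem laxL0_eq_fderiv (hg : DifferentiableAt ℂ (uncurry4 g) (w, z, x, y)) :
    LaxL0 Θ lam g w z x y
      = fderiv ℂ (uncurry4 g) (w, z, x, y) (laxField0 Θ lam (w, z, x, y)) := by
  rw [laxField0, fderiv_uncurry4_apply hg, LaxL0]
  simp only [uncurry4]
  ring

theorem laxL1_eq_fderiv (hg : DifferentiableAt ℂ (uncurry4 g) (w, z, x, y)) :
    LaxL1 Θ lam g w z x y
      = fderiv ℂ (uncurry4 g) (w, z, x, y) (laxField1 Θ lam (w, z, x, y)) := by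
  rw [laxField1, fderiv_uncurry4_apply hg, LaxL1]
  simp only [uncurry4]
  ring

theorem contDiff_laxField0 (hΘ : Smooth4 Θ) : ContDiff ℂ ⊤ (laxField0 Θ lam) := by
  have hyy := hΘ.py.py.contDiff
  have hxy := hΘ.py.px.contDiff
  unfold laxField0
  fun_prop

theorem contDiff_laxField1 (hΘ : Smooth4 Θ) : ContDiff ℂ ⊤ (laxField1 Θ lam) := by
  have hxx := hΘ.px.px.contDiff
  have hxy := hΘ.py.px.contDiff
  unfold laxField1
  fun_prop

theorem uncurry4_laxL0 (hg : Differentiable ℂ (uncurry4 g)) :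
    uncurry4 (LaxL0 Θ lam g) = fun p => fderiv ℂ (uncurry4 g) p (laxField0 Θ lam p) :=
  funext fun _ => laxL0_eq_fderiv (hg _)

theorem uncurry4_laxL1 (hg : Differentiable ℂ (uncurry4 g)) :
    uncurry4 (LaxL1 Θ lam g) = fun p => fderiv ℂ (uncurry4 g) p (laxField1 Θ lam p) :=
  funext fun _ => laxL1_eq_fderiv (hg _)

theorem Smooth4.laxL0 (hg : Smooth4 g) (hΘ : Smooth4 Θ) : Smooth4 (LaxL0 Θ lam g) :=
  hg.of_fderiv_apply (contDiff_laxField0 hΘ) (uncurry4_laxL0 hg.differentiable)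

theorem Smooth4.laxL1 (hg : Smooth4 g) (hΘ : Smooth4 Θ) : Smooth4 (LaxL1 Θ lam g) :=
  hg.of_fderiv_apply (contDiff_laxField1 hΘ) (uncurry4_laxL1 hg.differentiable)

theorem fderiv_apply_lieBracket_laxField (hΘ : Smooth4 Θ) (hf : Smooth4 f) :
    fderiv ℂ (uncurry4 f) (w, z, x, y)
        (lieBracket ℂ (laxField0 Θ lam) (laxField1 Θ lam) (w, z, x, y))
      = LaxL0 Θ lam (LaxL1 Θ lam f) w z x y - LaxL1 Θ lam (LaxL0 Θ lam f) w z x y := by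
  rw [laxL0_eq_fderiv ((hf.laxL1 hΘ).differentiable _),
    laxL1_eq_fderiv ((hf.laxL0 hΘ).differentiable _),
    uncurry4_laxL1 hf.differentiable, uncurry4_laxL0 hf.differentiable,
    fderiv_apply_lieBracket hf.contDiff.contDiffAt (by simp)
      ((contDiff_laxField1 hΘ).differentiable (by simp) _)
      ((contDiff_laxField0 hΘ).differentiable (by simp) _)]

theorem fderiv_laxField0_apply (hΘ : Smooth4 Θ) (p v : ℂ × ℂ × ℂ × ℂ) :
    fderiv ℂ (laxField0 Θ lam) p v = (0, 0, -(lam * fderiv ℂ (uncurry4 (py (py Θ))) p v),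
      lam * fderiv ℂ (uncurry4 (px (py Θ))) p v) := by
  have hyy := (hΘ.py.py.differentiable p).hasFDerivAt
  have hxy := (hΘ.py.px.differentiable p).hasFDerivAt
  have h : HasFDerivAt (laxField0 Θ lam) _ p :=
    (hasFDerivAt_const (-lam) p).prodMk <| (hasFDerivAt_const (0 : ℂ) p).prodMk <|
    (hyy.const_mul lam).neg.prodMk ((hasFDerivAt_const (1 : ℂ) p).add (hxy.const_mul lam))
  rw [h.fderiv]
  simp

theorem fderiv_laxField1_apply (hΘ : Smooth4 Θ) (p v : ℂ × ℂ × ℂ × ℂ) :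
    fderiv ℂ (laxField1 Θ lam) p v = (0, 0, -(lam * fderiv ℂ (uncurry4 (px (py Θ))) p v),
      lam * fderiv ℂ (uncurry4 (px (px Θ))) p v) := by
  have hxy := (hΘ.py.px.differentiable p).hasFDerivAt
  have hxx := (hΘ.px.px.differentiable p).hasFDerivAt
  have h : HasFDerivAt (laxField1 Θ lam) _ p :=
    (hasFDerivAt_const (0 : ℂ) p).prodMk <| (hasFDerivAt_const lam p).prodMk <|
      ((hasFDerivAt_const (1 : ℂ) p).sub (hxy.const_mul lam)).prodMk (hxx.const_mul lam)
  rw [h.fderiv]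
  simp

noncomputable def secondHeavenly (Θ : ℂ → ℂ → ℂ → ℂ → ℂ) : ℂ → ℂ → ℂ → ℂ → ℂ :=
  fun w z x y => px (pw Θ) w z x y + py (pz Θ) w z x y
    + px (px Θ) w z x y * py (py Θ) w z x y - px (py Θ) w z x y ^ 2

theorem px_secondHeavenly (hΘ : Smooth4 Θ) :
    px (secondHeavenly Θ) w z x y = px (px (pw Θ)) w z x y + px (py (pz Θ)) w z x y
      + px (px (px Θ)) w z x y * py (py Θ) w z x y + px (px Θ) w z x y * px (py (py Θ)) w z x y
      - 2 * px (py Θ) w z x y * px (px (py Θ)) w z x y := by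
  have d : ∀ g, Smooth4 g → HasDerivAt (fun t => g w z t y) (px g w z x y) x :=
    fun g hg => (hasDerivAt_x_slice (hg.differentiable _)).differentiableAt.hasDerivAt
  have h : HasDerivAt (fun t => secondHeavenly Θ w z t y) _ x :=
    (((d _ hΘ.pw.px).add (d _ hΘ.pz.py)).add ((d _ hΘ.px.px).mul (d _ hΘ.py.py))).sub
      ((d _ hΘ.py.px).pow 2)
  rw [px, h.deriv]
  ring

theorem py_secondHeavenly (hΘ : Smooth4 Θ) :
    py (secondHeavenly Θ) w z x y = py (px (pw Θ)) w z x y + py (py (pz Θ)) w z x y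
      + py (px (px Θ)) w z x y * py (py Θ) w z x y + px (px Θ) w z x y * py (py (py Θ)) w z x y
      - 2 * px (py Θ) w z x y * py (px (py Θ)) w z x y := by
  have d : ∀ g, Smooth4 g → HasDerivAt (fun t => g w z x t) (py g w z x y) y :=
    fun g hg => (hasDerivAt_y_slice (hg.differentiable _)).differentiableAt.hasDerivAt
  have h : HasDerivAt (fun t => secondHeavenly Θ w z x t) _ y :=
    (((d _ hΘ.pw.px).add (d _ hΘ.pz.py)).add ((d _ hΘ.px.px).mul (d _ hΘ.py.py))).sub
      ((d _ hΘ.py.px).pow 2)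
  rw [py, h.deriv]
  ring

theorem lieBracket_laxField (hΘ : Smooth4 Θ) :
    lieBracket ℂ (laxField0 Θ lam) (laxField1 Θ lam) (w, z, x, y)
      = (0, 0, lam ^ 2 * py (secondHeavenly Θ) w z x y,
          -(lam ^ 2 * px (secondHeavenly Θ) w z x y)) := by
  rw [lieBracket, fderiv_laxField0_apply hΘ, fderiv_laxField1_apply hΘ, laxField0, laxField1,
    fderiv_uncurry4_apply (hΘ.py.px.differentiable _),
    fderiv_uncurry4_apply (hΘ.px.px.differentiable _),
    fderiv_uncurry4_apply (hΘ.py.py.differentiable _),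
    fderiv_uncurry4_apply (hΘ.py.px.differentiable _),
    px_secondHeavenly hΘ, py_secondHeavenly hΘ]
  simp only [uncurry4, Prod.mk_sub_mk]
  simp only [py_px_comm, py_pz_comm, py_pw_comm, px_pz_comm, px_pw_comm,
    Smooth4.px, Smooth4.py, hΘ]
  ext <;> simp only <;> ring

end

/-- If Θ solves the second heavenly equation then the Lax pair commutes:
[L₀, L₁] = 0, i.e. L₀L₁f = L₁L₀f on smooth functions f, for every λ. -/
theorem lax_pair_commutes_second_heavenly
    (Θ : ℂ → ℂ → ℂ → ℂ → ℂ) (hΘ : Smooth4 Θ)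
    (heav : ∀ w z x y : ℂ,
      px (pw Θ) w z x y + py (pz Θ) w z x y
        + px (px Θ) w z x y * py (py Θ) w z x y
        - (px (py Θ) w z x y) ^ 2 = 0) :
    ∀ (lam : ℂ) (f : ℂ → ℂ → ℂ → ℂ → ℂ), Smooth4 f →
      ∀ w z x y : ℂ,
        LaxL0 Θ lam (LaxL1 Θ lam f) w z x y
          = LaxL1 Θ lam (LaxL0 Θ lam f) w z x y := by
  intro lam f hf w z x y
  have hH : secondHeavenly Θ = fun _ _ _ _ => 0 :=
    funext fun w => funext fun z => funext fun x => funext (heav w z x)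
  rw [← sub_eq_zero, ← fderiv_apply_lieBracket_laxField hΘ hf, lieBracket_laxField hΘ, hH]
  simp only [px, py, deriv_const', mul_zero, neg_zero, Prod.mk_zero_zero, map_zero]
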